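/- Suppose for each n, proj_n(T_θ f) = m_λ(n,θ)·proj_n f with m_λ(n,θ) = C_n^λ(cosθ)/C_n^λ(1), and define the ball-to-simplex map ψ(x) = (x₁²,…,x_d²). If T_θ^T is defined on the simplex by (T_θ^T f)∘ψ = T_θ^B(f∘ψ), and f ∈ V_n(W^T) corresponds to f∘ψ ∈ V_{2n}(W^B), then proj_n(T_θ^T f) = (C_{2n}^λ(cosθ)/C_{2n}^λ(1))·proj_n f = (p_n^{(λ-1/2,-1/2)}(cos2θ)/p_n^{(λ-1/2,-1/2)}(1))·proj_n f. -/

import Mathlib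

/-!
On the simplex every point is `ψ` of a point of the ball (take coordinates `√yᵢ`), so the
definition of `T_θ^T` and the eigenvalue relation on the ball give the Gegenbauer multiplier.

For the Jacobi form, write `p_n = q_n` with `q_n` a polynomial of degree `n` and put
`G(t) = q_n(2t² - 1)`. The substitution `x = 2t² - 1` turns the Jacobi weight
`(1 - x)^(λ-1/2) (1 + x)^(-1/2)` into a constant multiple of the Gegenbauer weight
`(1 - t²)^(λ-1/2)`. Since `q_n` is orthogonal to all polynomials of degree `< n` and
`t^(2j) = ((x + 1) / 2)^j`, `G` is orthogonal for the Gegenbauer weight to every even monomial of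
degree `< 2n`; odd monomials are orthogonal to the even polynomial `G` by symmetry. The Gegenbauer
polynomial `C_{2n}^λ` is orthogonal to all lower degrees too, because the Gegenbauer differential
operator is symmetric for this weight and has the distinct eigenvalues `-m(m + 2λ)` on the
`C_m^λ`. Orthogonality to all lower degrees determines a polynomial of degree `2n` up to a
scalar, hence `G = c C_{2n}^λ` with `c ≠ 0`; evaluating at `cos θ` and at `1` gives the ratio.
-/

open MeasureTheory

noncomputable section

/-- The Gegenbauer (ultraspherical) polynomial `C_n^λ`, defined by the standard
three-term recurrence. -/
def gegenbauer (lam : ℝ) : ℕ → ℝ → ℝ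
  | 0 => fun _ => 1
  | 1 => fun t => 2 * lam * t
  | n + 2 => fun t =>
      (2 * ((n : ℝ) + 1 + lam) * t * gegenbauer lam (n + 1) t
        - ((n : ℝ) + 2 * lam) * gegenbauer lam n t) / ((n : ℝ) + 2)

/-- `p : ℕ → ℝ → ℝ` is the family of orthonormal Jacobi polynomials with
parameters `(α, β)`. -/
def IsOrthonormalJacobi (α β : ℝ) (p : ℕ → ℝ → ℝ) : Prop :=
  (∀ n : ℕ, ∃ q : Polynomial ℝ,
      q.natDegree = n ∧ 0 < q.leadingCoeff ∧ ∀ t, p n t = q.eval t) ∧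
  (∀ m n : ℕ,
    ((∫ t in Set.Icc (-1 : ℝ) 1, (1 - t) ^ α * (1 + t) ^ β)⁻¹
        * ∫ t in Set.Icc (-1 : ℝ) 1,
            p m t * p n t * ((1 - t) ^ α * (1 + t) ^ β))
      = if m = n then 1 else 0)

/-- The ball-to-simplex map `ψ(x) = (x₁²,…,x_d²)`. -/
def psiMap {d : ℕ} (x : Fin d → ℝ) : Fin d → ℝ := fun i => (x i) ^ 2

open Polynomial Set

def gegenbauerPoly (l : ℝ) : ℕ → ℝ[X]
  | 0 => 1
  | 1 => C (2 * l) * X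
  | n + 2 => C ((n + 2 : ℝ)⁻¹) *
      (C (2 * (n + 1 + l)) * X * gegenbauerPoly l (n + 1) - C (n + 2 * l) * gegenbauerPoly l n)

theorem gegenbauer_eq_eval (l : ℝ) :
    ∀ (n : ℕ) (t : ℝ), gegenbauer l n t = (gegenbauerPoly l n).eval t
  | 0, t => by simp [gegenbauer, gegenbauerPoly]
  | 1, t => by simp [gegenbauer, gegenbauerPoly]
  | n + 2, t => by
    simp only [gegenbauer, gegenbauerPoly, gegenbauer_eq_eval l (n + 1), gegenbauer_eq_eval l n,
      eval_mul, eval_sub, eval_C, eval_X]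
    rw [div_eq_inv_mul]

theorem gegenbauerPoly_succ_succ (l : ℝ) (n : ℕ) :
    ((n : ℝ[X]) + 2) * gegenbauerPoly l (n + 2)
      = 2 * ((n : ℝ[X]) + 1 + C l) * X * gegenbauerPoly l (n + 1)
        - ((n : ℝ[X]) + 2 * C l) * gegenbauerPoly l n := by
  have hinv : ((n : ℝ[X]) + 2) * C ((n + 2 : ℝ)⁻¹) = 1 := by
    rw [show (n : ℝ[X]) + 2 = C (n + 2 : ℝ) by simp [C_ofNat], ← C_mul,
      mul_inv_cancel₀ (by positivity), C_1]
  rw [gegenbauerPoly, ← mul_assoc, hinv, one_mul]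
  simp only [map_mul, map_add, map_natCast, C_ofNat, map_one]

theorem gegenbauerPoly_derivative_identities (l : ℝ) (n : ℕ) :
    X * derivative (gegenbauerPoly l (n + 1)) - derivative (gegenbauerPoly l n)
        = ((n : ℝ[X]) + 1) * gegenbauerPoly l (n + 1) ∧
      derivative (gegenbauerPoly l (n + 1)) - X * derivative (gegenbauerPoly l n)
        = ((n : ℝ[X]) + 2 * C l) * gegenbauerPoly l n := by
  induction n with
  | zero =>
    simp only [gegenbauerPoly, derivative_mul, derivative_C, derivative_X, derivative_one,
      derivative_ofNat, map_mul, C_ofNat]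
    constructor <;> ring
  | succ n ih =>
    obtain ⟨hE, hF⟩ := ih
    have hR := gegenbauerPoly_succ_succ l n
    have hR' := congrArg derivative hR
    simp only [derivative_mul, derivative_sub, derivative_add, derivative_natCast, derivative_C,
      derivative_X, derivative_ofNat, derivative_one, zero_mul, zero_add, add_zero, mul_one] at hR'
    have h2 : (n : ℝ[X]) + 2 ≠ 0 := by exact_mod_cast (n + 1).succ_ne_zero
    have hF' : derivative (gegenbauerPoly l (n + 2)) - X * derivative (gegenbauerPoly l (n + 1))
        = (((n + 1 : ℕ) : ℝ[X]) + 2 * C l) * gegenbauerPoly l (n + 1) := by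
      refine mul_left_cancel₀ h2 ?_
      push_cast
      linear_combination hR' + ((n : ℝ[X]) + 2 * C l) * hE
    refine ⟨?_, hF'⟩
    refine mul_left_cancel₀ h2 ?_
    push_cast at hF' ⊢
    linear_combination X * (n + 2) * hF' - (n + 2) * hR - (n + 2) * (hF - X * hE)

def gegenbauerOp (l : ℝ) (f : ℝ[X]) : ℝ[X] :=
  (1 - X ^ 2) * derivative (derivative f) - (2 * C l + 1) * X * derivative f

theorem gegenbauerOp_gegenbauerPoly (l : ℝ) (n : ℕ) :
    gegenbauerOp l (gegenbauerPoly l n) = C (-(n * (n + 2 * l))) * gegenbauerPoly l n := by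
  cases n with
  | zero => simp [gegenbauerOp, gegenbauerPoly]
  | succ n =>
    obtain ⟨hE, hF⟩ := gegenbauerPoly_derivative_identities l n
    have hdE := congrArg derivative hE
    have hdF := congrArg derivative hF
    simp only [derivative_mul, derivative_sub, derivative_add, derivative_natCast, derivative_C,
      derivative_X, derivative_ofNat, derivative_one, zero_mul, zero_add, add_zero, mul_zero,
      one_mul] at hdE hdF
    simp only [gegenbauerOp, map_neg, map_mul, map_add, map_natCast, C_ofNat]
    push_cast
    linear_combination hdF - X * hdE - ((n : ℝ[X]) + 1 + 2 * C l) * hE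

theorem gegenbauerPoly_degree {l : ℝ} (hl : 0 < l) : ∀ n : ℕ, (gegenbauerPoly l n).degree = n
  | 0 => by simp [gegenbauerPoly]
  | 1 => degree_C_mul_X (by positivity)
  | n + 2 => by
    have hlead : (C (2 * (n + 1 + l)) * X * gegenbauerPoly l (n + 1)).degree = ↑(n + 2) := by
      rw [degree_mul, degree_C_mul_X (by positivity), gegenbauerPoly_degree hl (n + 1)]
      norm_cast
      omega
    have hlow : (C ((n : ℝ) + 2 * l) * gegenbauerPoly l n).degree < ↑(n + 2) := by
      rw [degree_C_mul (by positivity), gegenbauerPoly_degree hl n]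
      exact_mod_cast (by omega : n < n + 2)
    rw [gegenbauerPoly, degree_C_mul (by positivity), degree_sub_eq_left_of_degree_lt
      (hlead ▸ hlow), hlead]

def jacobiWeight (α β t : ℝ) : ℝ := (1 - t) ^ α * (1 + t) ^ β

theorem jacobiWeight_pos (α β : ℝ) {t : ℝ} (ht : t ∈ Ioo (-1 : ℝ) 1) :
    0 < jacobiWeight α β t :=
  mul_pos (Real.rpow_pos_of_pos (by linarith [ht.2]) _)
    (Real.rpow_pos_of_pos (by linarith [ht.1]) _)

theorem jacobiWeight_neg (α β t : ℝ) : jacobiWeight α β (-t) = jacobiWeight β α t := by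
  simp only [jacobiWeight, sub_neg_eq_add, ← sub_eq_add_neg, mul_comm]

theorem intervalIntegrable_jacobiWeight_zero_one {α : ℝ} (hα : -1 < α) (β : ℝ) :
    IntervalIntegrable (jacobiWeight α β) volume 0 1 := by
  have h : IntervalIntegrable (fun t : ℝ => (1 - t) ^ α) volume 0 1 := by
    simpa using
      ((intervalIntegral.intervalIntegrable_rpow' (a := 0) (b := 1) hα).comp_sub_left 1).symm
  refine h.mul_continuousOn (ContinuousOn.rpow_const (by fun_prop) fun t ht => Or.inl ?_)
  rw [uIcc_of_le zero_le_one] at ht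
  linarith [ht.1]

theorem intervalIntegrable_jacobiWeight {α β : ℝ} (hα : -1 < α) (hβ : -1 < β) :
    IntervalIntegrable (jacobiWeight α β) volume (-1) 1 := by
  have h := (IntervalIntegrable.iff_comp_neg).mp (intervalIntegrable_jacobiWeight_zero_one hβ α)
  simp only [jacobiWeight_neg, neg_zero] at h
  exact h.symm.trans (intervalIntegrable_jacobiWeight_zero_one hα β)

def HasFiniteMoments (w : ℝ → ℝ) : Prop :=
  ∀ u : ℝ[X], IntegrableOn (fun t => u.eval t * w t) (Ioo (-1 : ℝ) 1)

theorem hasFiniteMoments_jacobiWeight {α β : ℝ} (hα : -1 < α) (hβ : -1 < β) :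
    HasFiniteMoments (jacobiWeight α β) := by
  intro u
  have hw : IntegrableOn (jacobiWeight α β) (Ioo (-1 : ℝ) 1) :=
    ((intervalIntegrable_iff_integrableOn_Ioc_of_le (by norm_num)).mp
      (intervalIntegrable_jacobiWeight hα hβ)).mono_set Ioo_subset_Ioc_self
  obtain ⟨M, hM⟩ := isCompact_Icc.exists_bound_of_continuousOn (s := Icc (-1 : ℝ) 1)
    u.continuous.continuousOn
  refine hw.bdd_mul (c := M) u.continuous.aestronglyMeasurable ?_
  filter_upwards [ae_restrict_mem measurableSet_Ioo] with t ht
  exact hM t (Ioo_subset_Icc_self ht)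

def weightedInner (w : ℝ → ℝ) (u v : ℝ[X]) : ℝ :=
  ∫ t in Ioo (-1 : ℝ) 1, u.eval t * v.eval t * w t

section WeightedInner

variable {w : ℝ → ℝ}

theorem weightedInner_comm (u v : ℝ[X]) : weightedInner w u v = weightedInner w v u := by
  simp only [weightedInner, mul_comm (u.eval _)]

theorem weightedInner_smul_right (u v : ℝ[X]) (c : ℝ) :
    weightedInner w u (c • v) = c * weightedInner w u v := by
  simp only [weightedInner, ← integral_const_mul]
  congr 1 with t
  rw [eval_smul, smul_eq_mul]
  ring

theorem integrableOn_weightedInner (hw : HasFiniteMoments w) (u v : ℝ[X]) :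
    IntegrableOn (fun t => u.eval t * v.eval t * w t) (Ioo (-1 : ℝ) 1) := by
  simpa only [eval_mul] using hw (u * v)

theorem weightedInner_add_right (hw : HasFiniteMoments w) (u v v' : ℝ[X]) :
    weightedInner w u (v + v') = weightedInner w u v + weightedInner w u v' := by
  simp only [weightedInner, ← integral_add (integrableOn_weightedInner hw u v)
    (integrableOn_weightedInner hw u v')]
  congr 1 with t
  rw [eval_add]
  ring

theorem weightedInner_sub_right (hw : HasFiniteMoments w) (u v v' : ℝ[X]) :
    weightedInner w u (v - v') = weightedInner w u v - weightedInner w u v' := by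
  simp only [weightedInner, ← integral_sub (integrableOn_weightedInner hw u v)
    (integrableOn_weightedInner hw u v')]
  congr 1 with t
  rw [eval_sub]
  ring

theorem weightedInner_self_pos (hw : HasFiniteMoments w)
    (hpos : ∀ t ∈ Ioo (-1 : ℝ) 1, 0 < w t) {u : ℝ[X]} (hu : u ≠ 0) :
    0 < weightedInner w u u := by
  have hnonneg :
      0 ≤ᵐ[volume.restrict (Ioo (-1 : ℝ) 1)] fun t => u.eval t * u.eval t * w t := by
    filter_upwards [ae_restrict_mem measurableSet_Ioo] with t ht
    exact mul_nonneg (mul_self_nonneg _) (hpos t ht).le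
  rw [weightedInner, setIntegral_pos_iff_support_of_nonneg_ae hnonneg
    (integrableOn_weightedInner hw u u)]
  have hsub : Ioo (-1 : ℝ) 1 \ {t | u.IsRoot t}
      ⊆ Function.support (fun t => u.eval t * u.eval t * w t) ∩ Ioo (-1 : ℝ) 1 :=
    fun t ⟨ht, hroot⟩ => ⟨mul_ne_zero (mul_self_ne_zero.mpr hroot) (hpos t ht).ne', ht⟩
  calc (0 : ENNReal) < volume (Ioo (-1 : ℝ) 1) := by simp
    _ = volume (Ioo (-1 : ℝ) 1 \ {t | u.IsRoot t}) :=
      (measure_sdiff_null ((Polynomial.finite_setOfPred_isRoot hu).measure_zero _)).symm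
    _ ≤ _ := measure_mono hsub

theorem weightedInner_eq_zero_of_mem_degreeLT (hw : HasFiniteMoments w)
    (S : Sequence ℝ) {u : ℝ[X]} {m : ℕ} (h : ∀ k < m, weightedInner w u (S k) = 0)
    {s : ℝ[X]} (hs : s ∈ degreeLT ℝ m) : weightedInner w u s = 0 := by
  rw [← S.span_degreeLT fun i _ => (leadingCoeff_ne_zero.mpr (S.ne_zero i)).isUnit] at hs
  induction hs using Submodule.span_induction with
  | mem s hs =>
    obtain ⟨k, hk, rfl⟩ := hs
    exact h k hk
  | zero => simp [weightedInner]
  | add s s' _ _ ih ih' => rw [weightedInner_add_right hw, ih, ih', add_zero]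
  | smul c s _ ih => rw [weightedInner_smul_right, ih, mul_zero]

theorem eq_smul_of_forall_weightedInner_eq_zero (hw : HasFiniteMoments w)
    (hpos : ∀ t ∈ Ioo (-1 : ℝ) 1, 0 < w t) {m : ℕ} {u v : ℝ[X]}
    (hu : u.natDegree ≤ m) (hv : v.degree = m)
    (hu' : ∀ s ∈ degreeLT ℝ m, weightedInner w u s = 0)
    (hv' : ∀ s ∈ degreeLT ℝ m, weightedInner w v s = 0) :
    u = (u.coeff m / v.leadingCoeff) • v := by
  set r := u - (u.coeff m / v.leadingCoeff) • v
  have hr : r ∈ degreeLT ℝ m := by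
    rw [mem_degreeLT, degree_lt_iff_coeff_zero]
    intro k hk
    rcases hk.eq_or_lt with rfl | hk
    · have hv0 : v ≠ 0 := by rintro rfl; simp at hv
      rw [coeff_sub, coeff_smul, smul_eq_mul, ← natDegree_eq_of_degree_eq_some hv,
        coeff_natDegree, div_mul_cancel₀ _ (leadingCoeff_ne_zero.mpr hv0), sub_self]
    · rw [coeff_sub, coeff_smul, coeff_eq_zero_of_natDegree_lt (hu.trans_lt hk),
        coeff_eq_zero_of_degree_lt (hv.trans_lt (by exact_mod_cast hk)), smul_zero, sub_zero]
  have hrr : weightedInner w r r = 0 := by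
    rw [weightedInner_comm, weightedInner_sub_right hw, weightedInner_smul_right,
      weightedInner_comm, hu' r hr, weightedInner_comm, hv' r hr, mul_zero, sub_zero]
  by_contra hne
  exact (weightedInner_self_pos hw hpos (sub_ne_zero.mpr hne)).ne' hrr

end WeightedInner

theorem jacobiWeight_self {a t : ℝ} (ht : t ∈ Ioo (-1 : ℝ) 1) :
    jacobiWeight a a t = (1 - t ^ 2) ^ a := by
  rw [jacobiWeight, ← Real.mul_rpow (by linarith [ht.2]) (by linarith [ht.1])]
  ring_nf

theorem integral_deriv_one_sub_sq_rpow_mul_eq_zero {a : ℝ} (ha : -1 < a) (Q : ℝ[X]) :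
    ∫ t in Ioo (-1 : ℝ) 1,
      ((1 - X ^ 2) * derivative Q - C (2 * a + 2) * X * Q).eval t * jacobiWeight a a t = 0 := by
  set F : ℝ → ℝ := fun t => (1 - t ^ 2) ^ (a + 1) * Q.eval t
  have hderiv : ∀ t ∈ Ioo (-1 : ℝ) 1, HasDerivAt F
      (((1 - X ^ 2) * derivative Q - C (2 * a + 2) * X * Q).eval t * jacobiWeight a a t) t := by
    intro t ht
    have hpos : 0 < 1 - t ^ 2 := by nlinarith [ht.1, ht.2]
    have hsq : HasDerivAt (fun t : ℝ => 1 - t ^ 2) (-(2 * t)) t := by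
      simpa using (hasDerivAt_pow 2 t).const_sub 1
    refine ((hsq.rpow_const (p := a + 1) (Or.inl hpos.ne')).mul (Q.hasDerivAt t)).congr_deriv ?_
    rw [jacobiWeight_self ht, add_sub_cancel_right, Real.rpow_add_one hpos.ne']
    simp only [eval_sub, eval_mul, eval_one, eval_pow, eval_X, eval_C]
    ring
  have hboundary : ∀ t : ℝ, t ^ 2 = 1 → F t = 0 := fun t ht => by
    simp only [F, ht, sub_self, Real.zero_rpow (by linarith : a + 1 ≠ 0), zero_mul]
  have hcont : ContinuousOn F (Icc (-1 : ℝ) 1) :=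
    ((continuous_const.sub (continuous_pow 2)).rpow_const
      fun _ => Or.inr (by linarith)).continuousOn.mul Q.continuous.continuousOn
  have hint := (intervalIntegrable_iff_integrableOn_Ioo_of_le (by norm_num)).mpr
    (hasFiniteMoments_jacobiWeight ha ha
      ((1 - X ^ 2) * derivative Q - C (2 * a + 2) * X * Q))
  rw [← integral_Ioc_eq_integral_Ioo, ← intervalIntegral.integral_of_le (by norm_num),
    intervalIntegral.integral_eq_sub_of_hasDerivAt_of_le (by norm_num) hcont hderiv hint,
    hboundary 1 (by norm_num), hboundary (-1) (by norm_num), sub_zero]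

theorem weightedInner_gegenbauerOp {l : ℝ} (hl : -1 / 2 < l) (f g : ℝ[X]) :
    weightedInner (jacobiWeight (l - 1 / 2) (l - 1 / 2)) (gegenbauerOp l f) g
      = weightedInner (jacobiWeight (l - 1 / 2) (l - 1 / 2)) f (gegenbauerOp l g) := by
  have hw := hasFiniteMoments_jacobiWeight (α := l - 1 / 2) (β := l - 1 / 2)
    (by linarith) (by linarith)
  set Q := derivative f * g - f * derivative g
  have hQ : gegenbauerOp l f * g - f * gegenbauerOp l g
      = (1 - X ^ 2) * derivative Q - C (2 * (l - 1 / 2) + 2) * X * Q := by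
    rw [show 2 * (l - 1 / 2) + 2 = 2 * l + 1 by ring]
    simp only [gegenbauerOp, Q, derivative_mul, derivative_sub, map_add, map_mul, C_ofNat, map_one]
    ring
  rw [← sub_eq_zero, weightedInner, weightedInner, ← integral_sub
    (integrableOn_weightedInner hw _ _) (integrableOn_weightedInner hw _ _),
    ← integral_deriv_one_sub_sq_rpow_mul_eq_zero (by linarith : -1 < l - 1 / 2) Q, ← hQ]
  congr 1 with t
  simp only [eval_sub, eval_mul]
  ring

theorem weightedInner_gegenbauerPoly_of_ne {l : ℝ} (hl : -1 / 2 < l) {m k : ℕ} (hmk : m ≠ k) :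
    weightedInner (jacobiWeight (l - 1 / 2) (l - 1 / 2)) (gegenbauerPoly l m) (gegenbauerPoly l k)
      = 0 := by
  have h := weightedInner_gegenbauerOp hl (gegenbauerPoly l m) (gegenbauerPoly l k)
  rw [gegenbauerOp_gegenbauerPoly, gegenbauerOp_gegenbauerPoly, ← smul_eq_C_mul,
    ← smul_eq_C_mul, weightedInner_smul_right, weightedInner_comm, weightedInner_smul_right,
    weightedInner_comm] at h
  have hμ : (m : ℝ) * (m + 2 * l) ≠ k * (k + 2 * l) := by
    intro heq
    have hsum : (0 : ℝ) < m + k + 2 * l := by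
      have : (1 : ℝ) ≤ m + k := by exact_mod_cast (by omega : 1 ≤ m + k)
      linarith
    exact hmk (by exact_mod_cast (mul_left_cancel₀ hsum.ne' (by linear_combination heq) :
      (m : ℝ) = k))
  exact (mul_eq_mul_right_iff.mp h).resolve_left (by contrapose! hμ; linarith)

theorem weightedInner_gegenbauerPoly_of_mem_degreeLT {l : ℝ} (hl : 0 < l) {m : ℕ} {s : ℝ[X]}
    (hs : s ∈ degreeLT ℝ m) :
    weightedInner (jacobiWeight (l - 1 / 2) (l - 1 / 2)) (gegenbauerPoly l m) s = 0 :=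
  weightedInner_eq_zero_of_mem_degreeLT
    (hasFiniteMoments_jacobiWeight (by linarith) (by linarith))
    ⟨gegenbauerPoly l, gegenbauerPoly_degree hl⟩
    (fun k hk => weightedInner_gegenbauerPoly_of_ne (by linarith) hk.ne') hs

theorem integral_Ioo_neg_one_one_eq_integral_Ioo_zero_one {h : ℝ → ℝ}
    (hh : IntegrableOn h (Ioo (-1 : ℝ) 1)) :
    ∫ t in Ioo (-1 : ℝ) 1, h t = ∫ t in Ioo (0 : ℝ) 1, (h t + h (-t)) := by
  have hI : IntervalIntegrable h volume (-1) 1 :=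
    (intervalIntegrable_iff_integrableOn_Ioo_of_le (by norm_num)).mpr hh
  have hneg : IntervalIntegrable h volume (-1) 0 :=
    hI.mono_set (uIcc_subset_uIcc (by simp) (by simp))
  have hpos : IntervalIntegrable h volume 0 1 :=
    hI.mono_set (uIcc_subset_uIcc (by simp) (by simp))
  have hneg' : IntervalIntegrable (fun t => h (-t)) volume 0 1 := by
    simpa using (IntervalIntegrable.iff_comp_neg).mp hneg.symm
  simp only [← integral_Ioc_eq_integral_Ioo,
    ← intervalIntegral.integral_of_le (by norm_num : (0 : ℝ) ≤ 1),
    ← intervalIntegral.integral_of_le (by norm_num : (-1 : ℝ) ≤ 1)]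
  rw [intervalIntegral.integral_add hpos hneg', intervalIntegral.integral_comp_neg, neg_zero,
    ← intervalIntegral.integral_add_adjacent_intervals hneg hpos, add_comm]

theorem integral_Ioo_neg_one_one_eq_integral_two_sq_sub_one (g : ℝ → ℝ) :
    ∫ x in Ioo (-1 : ℝ) 1, g x = ∫ t in Ioo (0 : ℝ) 1, 4 * t * g (2 * t ^ 2 - 1) := by
  have himage : (fun t : ℝ => 2 * t ^ 2 - 1) '' Ioo 0 1 = Ioo (-1) 1 := by
    ext x
    constructor
    · rintro ⟨t, ⟨ht0, ht1⟩, rfl⟩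
      constructor <;> nlinarith
    · rintro ⟨hx1, hx2⟩
      have hsq : √((x + 1) / 2) ^ 2 = (x + 1) / 2 := Real.sq_sqrt (by linarith)
      refine ⟨√((x + 1) / 2), ⟨Real.sqrt_pos.mpr (by linarith), ?_⟩, ?_⟩
      · rw [Real.sqrt_lt' one_pos]
        linarith
      · simp only [hsq]
        ring
  have hderiv : ∀ t ∈ Ioo (0 : ℝ) 1,
      HasDerivWithinAt (fun t : ℝ => 2 * t ^ 2 - 1) (4 * t) (Ioo 0 1) t := fun t _ =>
    (((hasDerivAt_pow 2 t).const_mul 2).sub_const 1).hasDerivWithinAt.congr_deriv (by ring)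
  have hinj : InjOn (fun t : ℝ => 2 * t ^ 2 - 1) (Ioo 0 1) := fun s hs t ht hst => by
    have : (s - t) * (s + t) = 0 := by linear_combination hst / 2
    rcases mul_eq_zero.mp this with h | h
    · linarith
    · linarith [hs.1, ht.1]
  rw [← himage, integral_image_eq_integral_abs_deriv_smul measurableSet_Ioo hderiv hinj]
  refine setIntegral_congr_fun measurableSet_Ioo fun t ht => ?_
  rw [smul_eq_mul, abs_of_pos (by linarith [ht.1])]

theorem four_mul_jacobiWeight_two_sq_sub_one (a : ℝ) {t : ℝ} (ht : t ∈ Ioo (0 : ℝ) 1) :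
    4 * t * jacobiWeight a (-1 / 2) (2 * t ^ 2 - 1)
      = 2 ^ (a + 3 / 2) * jacobiWeight a a t := by
  have ht' : t ∈ Ioo (-1 : ℝ) 1 := ⟨by linarith [ht.1], ht.2⟩
  have hinv : (t ^ 2) ^ (-1 / 2 : ℝ) = t⁻¹ := by
    rw [show (-1 / 2 : ℝ) = -(1 / 2) by ring, Real.rpow_neg (sq_nonneg t), ← Real.sqrt_eq_rpow,
      Real.sqrt_sq ht.1.le]
  rw [jacobiWeight_self ht', jacobiWeight, show 1 - (2 * t ^ 2 - 1) = 2 * (1 - t ^ 2) by ring,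
    show 1 + (2 * t ^ 2 - 1) = 2 * t ^ 2 by ring,
    Real.mul_rpow zero_le_two (by nlinarith [ht'.1, ht'.2]),
    Real.mul_rpow zero_le_two (sq_nonneg t),
    hinv, show a + 3 / 2 = a + -1 / 2 + 2 by ring, Real.rpow_add two_pos, Real.rpow_add two_pos,
    Real.rpow_two]
  field_simp [ht.1.ne']
  ring

theorem weightedInner_jacobiWeight_eq_comp {a : ℝ} (ha : -1 < a) (u v : ℝ[X]) :
    weightedInner (jacobiWeight a (-1 / 2)) u v
      = 2 ^ (a + 1 / 2) * weightedInner (jacobiWeight a a)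
          (u.comp (2 * X ^ 2 - 1)) (v.comp (2 * X ^ 2 - 1)) := by
  have hw := hasFiniteMoments_jacobiWeight (α := a) (β := a) ha ha
  rw [weightedInner, integral_Ioo_neg_one_one_eq_integral_two_sq_sub_one, weightedInner,
    integral_Ioo_neg_one_one_eq_integral_Ioo_zero_one (integrableOn_weightedInner hw _ _),
    ← integral_const_mul]
  refine setIntegral_congr_fun measurableSet_Ioo fun t ht => ?_
  have hweight := four_mul_jacobiWeight_two_sq_sub_one a ht
  rw [show a + 3 / 2 = a + 1 / 2 + 1 by ring, Real.rpow_add_one two_ne_zero] at hweight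
  simp only [eval_comp, eval_sub, eval_mul, eval_pow, eval_X, eval_ofNat, eval_one, neg_sq,
    jacobiWeight_neg]
  linear_combination u.eval (2 * t ^ 2 - 1) * v.eval (2 * t ^ 2 - 1) * hweight

theorem weightedInner_comp_X_pow_of_odd {a : ℝ} (ha : -1 < a) (u : ℝ[X]) {k : ℕ}
    (hk : Odd k) :
    weightedInner (jacobiWeight a a) (u.comp (2 * X ^ 2 - 1)) (X ^ k) = 0 := by
  have hw := hasFiniteMoments_jacobiWeight (α := a) (β := a) ha ha
  rw [weightedInner, integral_Ioo_neg_one_one_eq_integral_Ioo_zero_one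
    (integrableOn_weightedInner hw _ _)]
  refine integral_eq_zero_of_ae (ae_of_all _ fun t => ?_)
  simp only [eval_comp, eval_sub, eval_mul, eval_pow, eval_X, eval_ofNat, eval_one, neg_sq,
    jacobiWeight_neg, hk.neg_pow, Pi.zero_apply]
  ring

theorem weightedInner_comp_eq_zero_of_mem_degreeLT {a : ℝ} (ha : -1 < a) {u : ℝ[X]} {n : ℕ}
    (hu : ∀ s ∈ degreeLT ℝ n, weightedInner (jacobiWeight a (-1 / 2)) u s = 0)
    {s : ℝ[X]} (hs : s ∈ degreeLT ℝ (2 * n)) :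
    weightedInner (jacobiWeight a a) (u.comp (2 * X ^ 2 - 1)) s = 0 := by
  refine weightedInner_eq_zero_of_mem_degreeLT
    (hasFiniteMoments_jacobiWeight ha ha) ⟨fun k => X ^ k, by simp⟩ (fun k hk => ?_) hs
  obtain ⟨j, rfl | rfl⟩ := Nat.even_or_odd' k
  · set v : ℝ[X] := (C (1 / 2) * (X + 1)) ^ j
    have hv : v.comp (2 * X ^ 2 - 1) = X ^ (2 * j) := by
      rw [pow_comp, mul_comp, C_comp, add_comp, X_comp, one_comp, sub_add_cancel, ← mul_assoc,
        ← C_ofNat, ← C_mul, show (1 / 2 : ℝ) * 2 = 1 by norm_num, C_1, one_mul, pow_mul]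
    have hdeg : v ∈ degreeLT ℝ n := by
      have : v.natDegree ≤ j * 1 := natDegree_pow_le_of_le j (by compute_degree!)
      exact mem_degreeLT.mpr (degree_le_natDegree.trans_lt
        (by exact_mod_cast (by omega : v.natDegree < n)))
    have h := weightedInner_jacobiWeight_eq_comp ha u v
    rw [hu v hdeg, hv, zero_eq_mul] at h
    exact h.resolve_left (by positivity)
  · exact weightedInner_comp_X_pow_of_odd ha u ⟨j, rfl⟩

theorem IsOrthonormalJacobi.weightedInner_eq_zero {α β : ℝ} {p : ℕ → ℝ → ℝ}
    (hp : IsOrthonormalJacobi α β p) {q : ℕ → ℝ[X]} (hq : ∀ n t, p n t = (q n).eval t)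
    {m k : ℕ} (hmk : m ≠ k) : weightedInner (jacobiWeight α β) (q m) (q k) = 0 := by
  have hnorm := hp.2 0 0
  have horth := hp.2 m k
  rw [if_pos rfl] at hnorm
  rw [if_neg hmk, mul_eq_zero, or_iff_right (left_ne_zero_of_mul_eq_one hnorm),
    integral_Icc_eq_integral_Ioo] at horth
  simpa only [weightedInner, jacobiWeight, hq] using horth

theorem natDegree_two_mul_X_sq_sub_one : (2 * X ^ 2 - 1 : ℝ[X]).natDegree = 2 := by
  compute_degree!

theorem exists_jacobi_two_sq_sub_one_eq_mul_gegenbauer {l : ℝ} (hl : 0 < l)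
    {p : ℕ → ℝ → ℝ} (hp : IsOrthonormalJacobi (l - 1 / 2) (-1 / 2) p) (n : ℕ) :
    ∃ c ≠ 0, ∀ t : ℝ, p n (2 * t ^ 2 - 1) = c * gegenbauer l (2 * n) t := by
  choose q hdeg hlead hq using hp.1
  have hq0 : ∀ k, q k ≠ 0 := fun k h => (hlead k).ne' (by rw [h, leadingCoeff_zero])
  let S : Sequence ℝ := ⟨q, fun k => by rw [degree_eq_natDegree (hq0 k), hdeg k]⟩
  have horth :
      ∀ s ∈ degreeLT ℝ n, weightedInner (jacobiWeight (l - 1 / 2) (-1 / 2)) (q n) s = 0 :=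
    fun s hs => weightedInner_eq_zero_of_mem_degreeLT
      (hasFiniteMoments_jacobiWeight (by linarith) (by norm_num)) S
      (fun k hk => hp.weightedInner_eq_zero hq hk.ne') hs
  set G := (q n).comp (2 * X ^ 2 - 1)
  have hGdeg : G.natDegree = 2 * n := by
    rw [natDegree_comp, hdeg, natDegree_two_mul_X_sq_sub_one, mul_comm]
  have hG0 : G ≠ 0 := by
    rw [Ne, comp_eq_zero_iff, not_or, not_and_or]
    refine ⟨hq0 n, Or.inr fun h => ?_⟩
    have h2 := natDegree_two_mul_X_sq_sub_one
    rw [h, natDegree_C] at h2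
    exact absurd h2 (by norm_num)
  have hG := eq_smul_of_forall_weightedInner_eq_zero
    (hasFiniteMoments_jacobiWeight (by linarith) (by linarith))
    (fun t ht => jacobiWeight_pos _ _ ht) hGdeg.le (gegenbauerPoly_degree hl (2 * n))
    (fun s hs => weightedInner_comp_eq_zero_of_mem_degreeLT (by linarith) horth hs)
    (fun s hs => weightedInner_gegenbauerPoly_of_mem_degreeLT hl hs)
  refine ⟨G.coeff (2 * n) / (gegenbauerPoly l (2 * n)).leadingCoeff, ?_, fun t => ?_⟩
  · rintro h
    rw [h, zero_smul] at hG
    exact hG0 hG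
  · have ht := congrArg (eval t) hG
    rw [eval_smul, smul_eq_mul] at ht
    rw [hq, gegenbauer_eq_eval, ← ht]
    simp [G, eval_comp]

/-- if the simplex translation `T_θ^T` is defined by
`(T_θ^T f)∘ψ = T_θ^B(f∘ψ)` and `f ∈ V_n(W^T)` corresponds to the eigenfunction
`f∘ψ ∈ V_{2n}(W^B)` of `T_θ^B` with multiplier `C_{2n}^λ(cosθ)/C_{2n}^λ(1)`,
then on the simplex `T_θ^T f = (C_{2n}^λ(cosθ)/C_{2n}^λ(1))·f
= (p_n^{(λ-1/2,-1/2)}(cos 2θ)/p_n^{(λ-1/2,-1/2)}(1))·f`. -/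
theorem stmt17 {d : ℕ} {lam : ℝ} (hlam : 0 < lam) (n : ℕ) (θ : ℝ)
    (p : ℕ → ℝ → ℝ) (hp : IsOrthonormalJacobi (lam - 1 / 2) (-1 / 2) p)
    (f TTf TBf : (Fin d → ℝ) → ℝ)
    (hdef : ∀ x : Fin d → ℝ, TTf (psiMap x) = TBf x)
    (heig : ∀ x : Fin d → ℝ,
      TBf x = (gegenbauer lam (2 * n) (Real.cos θ)
        / gegenbauer lam (2 * n) 1) * f (psiMap x)) :
    ∀ y : Fin d → ℝ, (∀ i, 0 ≤ y i) → (∑ i, y i) ≤ 1 →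
      TTf y = (gegenbauer lam (2 * n) (Real.cos θ)
          / gegenbauer lam (2 * n) 1) * f y ∧
      TTf y = (p n (Real.cos (2 * θ)) / p n 1) * f y := by
  intro y hy _
  have hψ : psiMap (fun i => √(y i)) = y := funext fun i => Real.sq_sqrt (hy i)
  have hball : TTf y = (gegenbauer lam (2 * n) (Real.cos θ)
      / gegenbauer lam (2 * n) 1) * f y := by
    rw [← hψ, hdef, heig]
  obtain ⟨c, hc, hquad⟩ := exists_jacobi_two_sq_sub_one_eq_mul_gegenbauer hlam hp n
  have hratio : p n (Real.cos (2 * θ)) / p n 1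
      = gegenbauer lam (2 * n) (Real.cos θ) / gegenbauer lam (2 * n) 1 := by
    have hone : p n 1 = c * gegenbauer lam (2 * n) 1 := by norm_num [← hquad]
    rw [Real.cos_two_mul, hquad, hone, mul_div_mul_left _ _ hc]
  exact ⟨hball, hball.trans (by rw [hratio])⟩

end
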